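/- arXiv:2603.29073 — 2 statements merged into one kernel-verified Lean document; each statement's English description precedes it below -/
import Mathlib

section
/- Let P ∈ ℤ[x₁,…,x_n] be nonzero and let y ∈ L, written uniquely as y = Σ_{k ∈ ℤ} c_k t^k where each c_k lies in the Laurent polynomial ring ℤ[x₁^{±1},…,x_n^{±1}] and only finitely many c_k are nonzero. If φ_P(y) ∈ L, then for every k < 0 the element P^{−k} divides c_k in the Laurent polynomial ring ℤ[x₁^{±1},…,x_n^{±1}]. -/
set_option synthInstance.maxHeartbeats 1000000
set_option maxHeartbeats 1000000


/-- The ambient field: the field of fractions of `ℤ[t, x₁, …, xₙ]`, where the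
variable indexed by `0` plays the role of `t` and the variable indexed by
`i.succ` plays the role of `xᵢ`. -/
abbrev Kk (n : ℕ) : Type := FractionRing (MvPolynomial (Fin (n + 1)) ℤ)

/-- The image of the `k`-th variable in the field of fractions. -/
noncomputable def XX (n : ℕ) (k : Fin (n + 1)) : Kk n :=
  algebraMap (MvPolynomial (Fin (n + 1)) ℤ) (Kk n) (MvPolynomial.X k)

/-- The Laurent subring `ℤ[t^{±1}, x₁^{±1}, …, xₙ^{±1}]` of `Kk n`. -/
noncomputable def LL (n : ℕ) : Subring (Kk n) :=
  Subring.closure (Set.range (XX n) ∪ Set.range fun k => (XX n k)⁻¹)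

/-- The Laurent polynomial subring `ℤ[x₁^{±1}, …, xₙ^{±1}]` of `Kk n`
(no `t`, no `t⁻¹`). -/
noncomputable def Lx (n : ℕ) : Subring (Kk n) :=
  Subring.closure
    (Set.range (fun i : Fin n => XX n i.succ) ∪
      Set.range fun i : Fin n => (XX n i.succ)⁻¹)

noncomputable def rr (n : ℕ) : MvPolynomial (Fin n) ℤ →+* Kk n :=
  (algebraMap (MvPolynomial (Fin (n+1)) ℤ) (Kk n)).comp
    (MvPolynomial.rename (Fin.succ : Fin n → Fin (n+1))).toRingHom

lemma rr_injective (n : ℕ) : Function.Injective (rr n) := by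
  have : ⇑(rr n) = ⇑(algebraMap (MvPolynomial (Fin (n+1)) ℤ) (Kk n)) ∘
      ⇑(MvPolynomial.rename (Fin.succ : Fin n → Fin (n+1))) := rfl
  rw [this]
  exact (IsFractionRing.injective _ _).comp
    (MvPolynomial.rename_injective _ (Fin.succ_injective n))

lemma rr_ne_zero (n : ℕ) {p : MvPolynomial (Fin n) ℤ} (hp : p ≠ 0) : rr n p ≠ 0 := by
  intro h; exact hp (rr_injective n (by simpa using h))

lemma XX_ne_zero (n : ℕ) (k : Fin (n+1)) : XX n k ≠ 0 := by
  intro h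
  have h2 : algebraMap (MvPolynomial (Fin (n+1)) ℤ) (Kk n) (MvPolynomial.X k)
      = algebraMap (MvPolynomial (Fin (n+1)) ℤ) (Kk n) 0 := by simpa [XX] using h
  exact MvPolynomial.X_ne_zero k (IsFractionRing.injective _ _ h2)

lemma rr_X (n : ℕ) (i : Fin n) : rr n (MvPolynomial.X i) = XX n i.succ := by
  simp [rr, XX]

/-- Elements of `Kk n` with denominator involving only the `x` variables. -/
noncomputable def Cx (n : ℕ) : Subring (Kk n) where
  carrier := {z | ∃ q r : MvPolynomial (Fin n) ℤ, r ≠ 0 ∧ rr n r * z = rr n q}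
  zero_mem' := ⟨0, 1, one_ne_zero, by simp⟩
  one_mem' := ⟨1, 1, one_ne_zero, by simp⟩
  add_mem' := by
    rintro a b ⟨q1, r1, h1, e1⟩ ⟨q2, r2, h2, e2⟩
    exact ⟨q1 * r2 + q2 * r1, r1 * r2, mul_ne_zero h1 h2, by
      rw [map_mul, map_add, map_mul, map_mul, mul_add]
      calc rr n r1 * rr n r2 * a + rr n r1 * rr n r2 * b
          = rr n r2 * (rr n r1 * a) + rr n r1 * (rr n r2 * b) := by ring
        _ = rr n q1 * rr n r2 + rr n q2 * rr n r1 := by rw [e1, e2]; ring⟩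
  mul_mem' := by
    rintro a b ⟨q1, r1, h1, e1⟩ ⟨q2, r2, h2, e2⟩
    exact ⟨q1 * q2, r1 * r2, mul_ne_zero h1 h2, by
      rw [map_mul, map_mul]
      calc rr n r1 * rr n r2 * (a * b) = (rr n r1 * a) * (rr n r2 * b) := by ring
        _ = _ := by rw [e1, e2]⟩
  neg_mem' := by
    rintro a ⟨q, r, h, e⟩
    exact ⟨-q, r, h, by rw [map_neg, ← e]; ring⟩


lemma mem_Cx_of_inv (n : ℕ) {p : MvPolynomial (Fin n) ℤ} (hp : p ≠ 0) :
    (rr n p)⁻¹ ∈ Cx n :=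
  ⟨1, p, hp, by rw [mul_inv_cancel₀ (rr_ne_zero n hp), map_one]⟩

lemma Lx_le_Cx (n : ℕ) : Lx n ≤ Cx n := by
  rw [Lx, Subring.closure_le]
  rintro z (⟨i, rfl⟩ | ⟨i, rfl⟩)
  · exact ⟨MvPolynomial.X i, 1, one_ne_zero, by rw [map_one, one_mul, rr_X]⟩
  · show (XX n i.succ)⁻¹ ∈ Cx n
    rw [← rr_X]
    exact mem_Cx_of_inv n (MvPolynomial.X_ne_zero i)

lemma zpow_mem_Cx (n : ℕ) {p : MvPolynomial (Fin n) ℤ} (hp : p ≠ 0) (k : ℤ) :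
    (rr n p) ^ k ∈ Cx n := by
  rcases le_or_gt 0 k with h | h
  · lift k to ℕ using h
    rw [zpow_natCast, ← map_pow]
    exact ⟨p ^ k, 1, one_ne_zero, by rw [map_one, one_mul]⟩
  · rw [← neg_neg k, zpow_neg, ← Int.toNat_of_nonneg (by omega : (0:ℤ) ≤ -k),
      zpow_natCast, ← map_pow]
    exact mem_Cx_of_inv n (pow_ne_zero _ hp)

lemma Lx_le_LL (n : ℕ) : Lx n ≤ LL n := by
  rw [Lx, LL]
  apply Subring.closure_mono
  rintro z (⟨i, rfl⟩ | ⟨i, rfl⟩)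
  · exact Or.inl ⟨i.succ, rfl⟩
  · exact Or.inr ⟨i.succ, rfl⟩

lemma finSuccEquiv_rename (n : ℕ) (p : MvPolynomial (Fin n) ℤ) :
    MvPolynomial.finSuccEquiv ℤ n (MvPolynomial.rename Fin.succ p) = Polynomial.C p := by
  induction p using MvPolynomial.induction_on with
  | C a => simp [MvPolynomial.finSuccEquiv_apply]
  | add p q hp hq => simp [hp, hq]
  | mul_X p i hp => simp [hp, MvPolynomial.finSuccEquiv_X_succ]

lemma indep (n : ℕ) (s : Finset ℤ) (u : ℤ → Kk n) (hu : ∀ j, u j ∈ Cx n)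
    (h : ∑ j ∈ s, u j * XX n 0 ^ j = 0) : ∀ j ∈ s, u j = 0 := by
  choose q r hne he using hu
  set N : ℕ := s.sup fun j => (-j).toNat with hN
  have hjN : ∀ j ∈ s, (0:ℤ) ≤ j + N := by
    intro j hj
    have : (-j).toNat ≤ N := Finset.le_sup (f := fun j => (-j).toNat) hj
    omega
  set e : ℤ → ℕ := fun j => (j + N).toNat with hedef
  set Q : ℤ → MvPolynomial (Fin n) ℤ := fun j => q j * ∏ i ∈ s.erase j, r i with hQ
  set R : MvPolynomial (Fin n) ℤ := ∏ i ∈ s, r i with hR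
  have hRne : R ≠ 0 := Finset.prod_ne_zero_iff.2 fun i _ => hne i
  have key : ∑ j ∈ s, (MvPolynomial.rename (Fin.succ : Fin n → Fin (n+1)) (Q j)
      * MvPolynomial.X 0 ^ (e j)) = 0 := by
    apply IsFractionRing.injective (MvPolynomial (Fin (n+1)) ℤ) (Kk n)
    rw [map_sum, map_zero]
    have : ∀ j ∈ s, algebraMap (MvPolynomial (Fin (n+1)) ℤ) (Kk n)
        (MvPolynomial.rename (Fin.succ : Fin n → Fin (n+1)) (Q j) * MvPolynomial.X 0 ^ (e j))
        = rr n R * XX n 0 ^ (N:ℤ) * (u j * XX n 0 ^ j) := by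
      intro j hj
      have h1 : rr n R * u j = rr n (Q j) := by
        rw [hR, ← Finset.mul_prod_erase s r hj, map_mul, mul_comm (rr n (r j)), mul_assoc,
          he j, hQ, map_mul, mul_comm]
      have h2 : XX n 0 ^ (N:ℤ) * XX n 0 ^ j = XX n 0 ^ ((e j : ℤ)) := by
        rw [← zpow_add₀ (XX_ne_zero n 0)]
        congr 1
        simp only [hedef]
        have := hjN j hj
        omega
      calc algebraMap (MvPolynomial (Fin (n+1)) ℤ) (Kk n)
            (MvPolynomial.rename (Fin.succ : Fin n → Fin (n+1)) (Q j) * MvPolynomial.X 0 ^ (e j))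
          = rr n (Q j) * XX n 0 ^ ((e j : ℤ)) := by
            rw [map_mul, map_pow, zpow_natCast]; rfl
        _ = (rr n R * u j) * (XX n 0 ^ (N:ℤ) * XX n 0 ^ j) := by rw [h1, h2]
        _ = rr n R * XX n 0 ^ (N:ℤ) * (u j * XX n 0 ^ j) := by ring
    rw [Finset.sum_congr rfl this, ← Finset.mul_sum, h, mul_zero]
  intro j0 hj0
  have hQ0 : Q j0 = 0 := by
    have := congrArg (MvPolynomial.finSuccEquiv ℤ n) key
    rw [map_sum, map_zero] at this
    have h2 := congrArg (fun p => Polynomial.coeff p (e j0)) this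
    simp only [map_mul, map_pow, finSuccEquiv_rename, MvPolynomial.finSuccEquiv_X_zero,
      Polynomial.finset_sum_coeff, Polynomial.coeff_C_mul, Polynomial.coeff_X_pow,
      Polynomial.coeff_zero] at h2
    rw [Finset.sum_eq_single_of_mem j0 hj0] at h2
    · simpa using h2
    · intro j hj hjne
      have : e j ≠ e j0 := by
        have := hjN j hj; have := hjN j0 hj0
        simp only [hedef]; omega
      rw [if_neg (Ne.symm this), mul_zero]
  have : rr n R * u j0 = 0 := by
    have h1 : rr n R * u j0 = rr n (Q j0) := by
      rw [hR, ← Finset.mul_prod_erase s r hj0, map_mul, mul_comm (rr n (r j0)), mul_assoc,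
        he j0, hQ, map_mul, mul_comm]
    rw [h1, hQ0, map_zero]
  rcases mul_eq_zero.1 this with h' | h'
  · exact absurd h' (rr_ne_zero n hRne)
  · exact h'

/-- Powers of `t` as a monoid hom `Multiplicative ℤ →* Kk n`. -/
noncomputable def tpow (n : ℕ) : Multiplicative ℤ →* Kk n where
  toFun := fun k => XX n 0 ^ (Multiplicative.toAdd k)
  map_one' := by simp
  map_mul' := fun a b => by
    simp only [toAdd_mul]
    exact zpow_add₀ (XX_ne_zero n 0) _ _

/-- The evaluation map from Laurent polynomials (in `t`) with coefficients
in `Lx n` to `Kk n`. -/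
noncomputable def Θ (n : ℕ) : AddMonoidAlgebra (Lx n) ℤ →+* Kk n :=
  AddMonoidAlgebra.liftNCRingHom (Lx n).subtype (tpow n) (fun _ _ => Commute.all _ _)

lemma Θ_single (n : ℕ) (k : ℤ) (a : Lx n) :
    Θ n (AddMonoidAlgebra.single k a) = (a : Kk n) * XX n 0 ^ k :=
  AddMonoidAlgebra.liftNC_single _ _ _ _

lemma Θ_apply (n : ℕ) (f : AddMonoidAlgebra (Lx n) ℤ) :
    Θ n f = ∑ k ∈ f.coeff.support, (f.coeff k : Kk n) * XX n 0 ^ k := by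
  conv_lhs => rw [← AddMonoidAlgebra.sum_coeff_single f]
  rw [Finsupp.sum, map_sum]
  exact Finset.sum_congr rfl fun k _ => Θ_single n k (f.coeff k)

lemma LL_le_range (n : ℕ) : LL n ≤ (Θ n).range := by
  rw [LL, Subring.closure_le]
  rintro z (⟨k, rfl⟩ | ⟨k, rfl⟩)
  · refine Fin.cases ?_ ?_ k
    · exact ⟨AddMonoidAlgebra.single 1 1, by rw [Θ_single]; simp⟩
    · intro i
      refine ⟨AddMonoidAlgebra.single 0 ⟨XX n i.succ, ?_⟩, by rw [Θ_single]; simp⟩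
      exact Subring.subset_closure (Or.inl ⟨i, rfl⟩)
  · refine Fin.cases ?_ ?_ k
    · refine ⟨AddMonoidAlgebra.single (-1) 1, by rw [Θ_single]; simp [zpow_neg]⟩
    · intro i
      refine ⟨AddMonoidAlgebra.single 0 ⟨(XX n i.succ)⁻¹, ?_⟩, by rw [Θ_single]; simp⟩
      exact Subring.subset_closure (Or.inr ⟨i, rfl⟩)

/-- Every element of `LL n` is a finite sum `∑ aₖ tᵏ` with `aₖ ∈ Lx n`. -/
lemma LL_expand (n : ℕ) {z : Kk n} (hz : z ∈ LL n) :
    ∃ g : ℤ →₀ (Lx n), z = ∑ k ∈ g.support, (g k : Kk n) * XX n 0 ^ k := by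
  obtain ⟨f, hf⟩ := LL_le_range n hz
  exact ⟨f.coeff, by rw [← hf, Θ_apply]⟩

lemma zpow_decomp {K : Type*} [Field K] (a : K) (m : ℤ) :
    a ^ m = a ^ m.toNat * (a⁻¹) ^ (-m).toNat := by
  rcases le_or_gt 0 m with h | h
  · rw [(by omega : (-m).toNat = 0), pow_zero, mul_one, ← zpow_natCast,
      Int.toNat_of_nonneg h]
  · rw [(by omega : m.toNat = 0), pow_zero, one_mul, inv_pow, ← zpow_natCast,
      Int.toNat_of_nonneg (by omega : (0:ℤ) ≤ -m), zpow_neg, inv_inv]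

lemma phi_fix (n : ℕ) (φ : LL n →+* Kk n)
    (hφx : ∀ (i : Fin n) (z : LL n), (z : Kk n) = XX n i.succ → φ z = XX n i.succ) :
    ∀ (x : Kk n), x ∈ Lx n → ∀ z : LL n, (z : Kk n) = x → φ z = x := by
  intro x hx
  induction hx using Subring.closure_induction with
  | mem x hmem =>
    rcases hmem with ⟨i, rfl⟩ | ⟨i, rfl⟩
    · exact hφx i
    · intro z hz
      set w : LL n := ⟨XX n i.succ, Subring.subset_closure (Or.inl ⟨i.succ, rfl⟩)⟩ with hw
      have hwz : w * z = 1 := by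
        apply Subtype.ext
        show XX n i.succ * (z : Kk n) = 1
        rw [hz]
        exact mul_inv_cancel₀ (XX_ne_zero n i.succ)
      have h2 := congrArg φ hwz
      rw [map_mul, map_one, hφx i w rfl] at h2
      exact eq_inv_of_mul_eq_one_right h2
  | zero =>
    intro z hz
    rw [show z = 0 from Subtype.ext (by rw [hz]; rfl), map_zero]
  | one =>
    intro z hz
    rw [show z = 1 from Subtype.ext (by rw [hz]; rfl), map_one]
  | add x y hx hy px py =>
    intro z hz
    have : z = ⟨x, Lx_le_LL n hx⟩ + ⟨y, Lx_le_LL n hy⟩ := Subtype.ext (by rw [hz]; rfl)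
    rw [this, map_add, px _ rfl, py _ rfl]
  | neg x hx px =>
    intro z hz
    have : z = -⟨x, Lx_le_LL n hx⟩ := Subtype.ext (by rw [hz]; rfl)
    rw [this, map_neg, px _ rfl]
  | mul x y hx hy px py =>
    intro z hz
    have : z = ⟨x, Lx_le_LL n hx⟩ * ⟨y, Lx_le_LL n hy⟩ := Subtype.ext (by rw [hz]; rfl)
    rw [this, map_mul, px _ rfl, py _ rfl]

/-- Let `P ∈ ℤ[x₁,…,xₙ]` be nonzero and let `φ : L → K` be the
(unique) ring homomorphism fixing each `xᵢ` and sending `t ↦ P / t`.  Write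
`y ∈ L` (uniquely) as `y = Σ_{k ∈ ℤ} c_k t^k` with each `c_k` in the Laurent
polynomial ring `ℤ[x₁^{±1},…,xₙ^{±1}]`, only finitely many nonzero.  If
`φ y ∈ L`, then for every `k < 0` the element `P^{-k}` divides `c_k` in the
Laurent polynomial ring. -/
theorem stmt_1 (n : ℕ) (hn : 1 ≤ n)
    (P : MvPolynomial (Fin n) ℤ) (hP : P ≠ 0)
    (φ : LL n →+* Kk n)
    (hφx : ∀ (i : Fin n) (z : LL n), (z : Kk n) = XX n i.succ → φ z = XX n i.succ)
    (hφt : ∀ z : LL n, (z : Kk n) = XX n 0 →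
      (φ z : Kk n) =
        algebraMap (MvPolynomial (Fin (n + 1)) ℤ) (Kk n)
          (MvPolynomial.rename Fin.succ P) / XX n 0)
    (y : LL n)
    (c : ℤ → Kk n) (hc : ∀ k, c k ∈ Lx n)
    (hfin : (Function.support c).Finite)
    (hy : (y : Kk n) = ∑ᶠ k : ℤ, c k * XX n 0 ^ k)
    (hφy : (φ y : Kk n) ∈ LL n) :
    ∀ k : ℤ, k < 0 →
      ∃ d ∈ Lx n,
        c k =
          (algebraMap (MvPolynomial (Fin (n + 1)) ℤ) (Kk n)
              (MvPolynomial.rename Fin.succ P)) ^ (-k).toNat * d := by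
  set t : Kk n := XX n 0 with htdef
  set P' : Kk n := algebraMap (MvPolynomial (Fin (n + 1)) ℤ) (Kk n)
      (MvPolynomial.rename Fin.succ P) with hP'def
  have hP'rr : P' = rr n P := rfl
  have hP'ne : P' ≠ 0 := hP'rr ▸ rr_ne_zero n hP
  have htne : t ≠ 0 := XX_ne_zero n 0
  have hPtne : P' / t ≠ 0 := div_ne_zero hP'ne htne
  set sc : Finset ℤ := hfin.toFinset with hscdef
  have hcs : ∀ j, j ∉ sc → c j = 0 := by
    intro j hj
    by_contra hne
    exact hj (hfin.mem_toFinset.2 hne)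
  -- rewrite the finsum as a finite sum
  have hy2 : (y : Kk n) = ∑ j ∈ sc, c j * t ^ j := by
    rw [hy]
    apply finsum_eq_finset_sum_of_support_subset
    intro j hj
    simp only [Function.mem_support] at hj
    apply hfin.mem_toFinset.2
    intro hc0
    exact hj (by rw [hc0, zero_mul])
  -- lift everything to LL
  set T : LL n := ⟨t, Subring.subset_closure (Or.inl ⟨0, rfl⟩)⟩ with hT
  set Ti : LL n := ⟨t⁻¹, Subring.subset_closure (Or.inr ⟨0, rfl⟩)⟩ with hTi
  set Cc : ℤ → LL n := fun j => ⟨c j, Lx_le_LL n (hc j)⟩ with hCc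
  have hyLL : y = ∑ j ∈ sc, Cc j * T ^ j.toNat * Ti ^ (-j).toNat := by
    apply Subtype.ext
    rw [hy2]
    push_cast
    exact Finset.sum_congr rfl fun j _ => by rw [mul_assoc, ← zpow_decomp]
  -- compute φ y
  have hφT : φ T = P' / t := hφt T rfl
  have hφTi : φ Ti = (P' / t)⁻¹ := by
    have hTTi : T * Ti = 1 := by
      apply Subtype.ext
      show t * t⁻¹ = 1
      exact mul_inv_cancel₀ htne
    have h2 := congrArg φ hTTi
    rw [map_mul, map_one, hφT] at h2
    exact eq_inv_of_mul_eq_one_right h2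
  have hφy2 : (φ y : Kk n) = ∑ j ∈ sc, c j * (P' / t) ^ j := by
    rw [hyLL, map_sum]
    refine Finset.sum_congr rfl fun j _ => ?_
    rw [map_mul, map_mul, map_pow, map_pow, hφT, hφTi,
      phi_fix n φ hφx (c j) (hc j) (Cc j) rfl, mul_assoc, ← zpow_decomp]
  have hdiv : ∀ j : ℤ, (P' / t) ^ j = P' ^ j * t ^ (-j) := by
    intro j
    rw [div_eq_mul_inv, mul_zpow, inv_zpow, ← zpow_neg]
  -- expand φ y as a Laurent series in t
  obtain ⟨g, hg⟩ := LL_expand n hφy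
  have hgs : ∀ j, j ∉ g.support → ((g j : Kk n)) = 0 := by
    intro j hj
    rw [Finsupp.notMem_support_iff.1 hj]
    rfl
  set s : Finset ℤ := sc.image (fun j => -j) ∪ g.support with hs
  set u : ℤ → Kk n := fun j => c (-j) * P' ^ (-j) - (g j : Kk n) with hu
  have humem : ∀ j, u j ∈ Cx n := fun j =>
    sub_mem (mul_mem (Lx_le_Cx n (hc (-j))) (hP'rr ▸ zpow_mem_Cx n hP (-j)))
      (Lx_le_Cx n (g j).2)
  have hsum : ∑ j ∈ s, u j * t ^ j = 0 := by
    have expand : ∑ j ∈ s, u j * t ^ j =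
        (∑ j ∈ s, c (-j) * P' ^ (-j) * t ^ j) - ∑ j ∈ s, (g j : Kk n) * t ^ j := by
      rw [← Finset.sum_sub_distrib]
      exact Finset.sum_congr rfl fun j _ => by rw [hu]; ring
    have first : ∑ j ∈ s, c (-j) * P' ^ (-j) * t ^ j = (φ y : Kk n) := by
      rw [← Finset.sum_subset (Finset.subset_union_left (s₂ := g.support))
        (fun j _ hj => by
          rw [hcs (-j) (fun hmem => hj (Finset.mem_image.2 ⟨-j, hmem, neg_neg j⟩)),
            zero_mul, zero_mul]),
        Finset.sum_image (fun a _ b _ h => neg_inj.1 h), hφy2]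
      refine Finset.sum_congr rfl fun j _ => ?_
      rw [neg_neg, hdiv j]
      ring
    have second : ∑ j ∈ s, (g j : Kk n) * t ^ j = (φ y : Kk n) := by
      rw [← Finset.sum_subset (Finset.subset_union_right (s₁ := sc.image (fun j => -j)))
        (fun j _ hj => by rw [hgs j hj, zero_mul]), hg]
    rw [expand, first, second, sub_self]
  have hzero := indep n s u humem hsum
  intro k hk
  by_cases hks : -k ∈ s
  · refine ⟨(g (-k) : Kk n), (g (-k)).2, ?_⟩
    have h0 := hzero (-k) hks
    rw [hu] at h0
    simp only [neg_neg] at h0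
    have hck : c k * P' ^ k = (g (-k) : Kk n) := by
      have := sub_eq_zero.1 h0
      exact this
    have hPk : P' ^ k * P' ^ (-k) = 1 := by
      rw [← zpow_add₀ hP'ne, add_neg_cancel, zpow_zero]
    calc c k = c k * (P' ^ k * P' ^ (-k)) := by rw [hPk, mul_one]
      _ = (c k * P' ^ k) * P' ^ (-k) := by ring
      _ = P' ^ (-k) * (g (-k) : Kk n) := by rw [hck]; ring
      _ = P' ^ ((-k).toNat) * (g (-k) : Kk n) := by
          rw [← zpow_natCast P' ((-k).toNat), Int.toNat_of_nonneg (by omega : (0:ℤ) ≤ -k)]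
  · refine ⟨0, zero_mem _, ?_⟩
    rw [mul_zero]
    apply hcs
    intro hmem
    exact hks (Finset.mem_union_left _ (Finset.mem_image.2 ⟨k, hmem, rfl⟩))
end

section
/- Let K be the field of fractions of MvPolynomial (Fin 2) ℤ with variables x₁, x₂, let L ⊆ K be the Laurent subring ℤ[x₁^{±1}, x₂^{±1}], and let F be the field of fractions of Polynomial ℤ with variable X. Let ψ : L → F be the unique ring homomorphism sending x₁ to X and x₂ to −1. Then the five elements x₁, x₂, (1+x₂)/x₁, (1+x₁)/x₂, (1+x₁+x₂)/(x₁x₂) all lie in L, their images under ψ are X, −1, 0, −1−X, −1 respectively, and the image under ψ of the subring of K generated by these five elements is exactly the polynomial subring ℤ[X] of F. (This is the specialisation x₂ = −1 of the cluster algebra of type A₂, which makes the remaining variable x₁ polyamorous and yields the specialised cluster algebra ℤ[x₁].) -/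
set_option synthInstance.maxHeartbeats 1000000
set_option maxHeartbeats 1000000


/-- The field `ℚ(x₁, x₂)`: the field of fractions of `ℤ[x₁, x₂]`. -/
abbrev K2 : Type := FractionRing (MvPolynomial (Fin 2) ℤ)

/-- The image of the first variable `x₁` in `K2`. -/
noncomputable def x1 : K2 :=
  algebraMap (MvPolynomial (Fin 2) ℤ) K2 (MvPolynomial.X 0)

/-- The image of the second variable `x₂` in `K2`. -/
noncomputable def x2 : K2 :=
  algebraMap (MvPolynomial (Fin 2) ℤ) K2 (MvPolynomial.X 1)

/-- The Laurent subring `ℤ[x₁^{±1}, x₂^{±1}]` of `K2`. -/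
noncomputable def L2 : Subring K2 :=
  Subring.closure {x1, x2, x1⁻¹, x2⁻¹}

/-- The field `ℚ(X)`: the field of fractions of `ℤ[X]`. -/
abbrev Ft : Type := FractionRing (Polynomial ℤ)

/-- The image of the variable `X` in `ℚ(X)`. -/
noncomputable def tF : Ft := algebraMap (Polynomial ℤ) Ft Polynomial.X

/-- The cluster algebra of type `A₂`: the subring of `K2` generated by the
five cluster variables. -/
noncomputable def A2 : Subring K2 :=
  Subring.closure
    {x1, x2, (1 + x2) / x1, (1 + x1) / x2, (1 + x1 + x2) / (x1 * x2)}

lemma hx1 : x1 ≠ 0 := by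
  simp only [x1]
  exact (map_ne_zero_iff _ (IsFractionRing.injective _ _)).mpr (MvPolynomial.X_ne_zero 0)

lemma hx2 : x2 ≠ 0 := by
  simp only [x2]
  exact (map_ne_zero_iff _ (IsFractionRing.injective _ _)).mpr (MvPolynomial.X_ne_zero 1)

lemma htF : tF ≠ 0 := by
  simp only [tF]
  exact (map_ne_zero_iff _ (IsFractionRing.injective _ _)).mpr Polynomial.X_ne_zero

lemma m1 : x1 ∈ L2 := Subring.subset_closure (by simp)
lemma m2 : x2 ∈ L2 := Subring.subset_closure (by simp)
lemma mi1 : x1⁻¹ ∈ L2 := Subring.subset_closure (by simp)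
lemma mi2 : x2⁻¹ ∈ L2 := Subring.subset_closure (by simp)

lemma m3 : (1 + x2) / x1 ∈ L2 := by
  rw [div_eq_mul_inv]
  exact L2.mul_mem (L2.add_mem L2.one_mem m2) mi1

lemma m4 : (1 + x1) / x2 ∈ L2 := by
  rw [div_eq_mul_inv]
  exact L2.mul_mem (L2.add_mem L2.one_mem m1) mi2

lemma m5 : (1 + x1 + x2) / (x1 * x2) ∈ L2 := by
  rw [div_eq_mul_inv, mul_inv]
  exact L2.mul_mem (L2.add_mem (L2.add_mem L2.one_mem m1) m2) (L2.mul_mem mi1 mi2)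

noncomputable def e1 : L2 := ⟨x1, m1⟩
noncomputable def e2 : L2 := ⟨x2, m2⟩
noncomputable def i1 : L2 := ⟨x1⁻¹, mi1⟩
noncomputable def i2 : L2 := ⟨x2⁻¹, mi2⟩
noncomputable def g3 : L2 := ⟨(1 + x2) / x1, m3⟩
noncomputable def g4 : L2 := ⟨(1 + x1) / x2, m4⟩
noncomputable def g5 : L2 := ⟨(1 + x1 + x2) / (x1 * x2), m5⟩

section PSI
variable (ψ : L2 →+* Ft)
    (hψ1 : ∀ z : L2, (z : K2) = x1 → ψ z = tF)
    (hψ2 : ∀ z : L2, (z : K2) = x2 → ψ z = -1)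

include hψ1 in
lemma psi_i1 : ψ i1 = tF⁻¹ := by
  have h : e1 * i1 = 1 := by
    ext; simp [e1, i1, mul_inv_cancel₀ hx1]
  have := congrArg ψ h
  rw [map_mul, map_one, hψ1 e1 rfl] at this
  field_simp [htF] at this ⊢
  linear_combination this

include hψ2 in
lemma psi_i2 : ψ i2 = -1 := by
  have h : e2 * i2 = 1 := by
    ext; simp [e2, i2, mul_inv_cancel₀ hx2]
  have := congrArg ψ h
  rw [map_mul, map_one, hψ2 e2 rfl] at this
  linear_combination -this

include hψ2 in
lemma psi_g3 : ψ g3 = 0 := by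
  have h : g3 = (1 + e2) * i1 := by
    ext; simp [g3, e2, i1, div_eq_mul_inv]
  rw [h, map_mul, map_add, map_one, hψ2 e2 rfl]
  ring

include hψ1 hψ2 in
lemma psi_g4 : ψ g4 = -1 - tF := by
  have h : g4 = (1 + e1) * i2 := by
    ext; simp [g4, e1, i2, div_eq_mul_inv]
  rw [h, map_mul, map_add, map_one, hψ1 e1 rfl, psi_i2 ψ hψ2]
  ring

include hψ1 hψ2 in
lemma psi_g5 : ψ g5 = -1 := by
  have h : g5 = (1 + e1 + e2) * (i1 * i2) := by
    ext
    simp only [L2.coe_mul, L2.coe_add, L2.coe_one, g5, e1, e2, i1, i2, div_eq_mul_inv, mul_inv]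
  rw [h, map_mul, map_mul, map_add, map_add, map_one, hψ1 e1 rfl, hψ2 e2 rfl,
    psi_i1 ψ hψ1, psi_i2 ψ hψ2]
  field_simp
  rw [add_comm 1 tF, add_neg_cancel_right, div_self htF]
end PSI

lemma range_eq : Set.range (algebraMap (Polynomial ℤ) Ft) = (Subring.closure {tF} : Subring Ft) := by
  have h1 : (Subring.closure {Polynomial.X} : Subring (Polynomial ℤ)) = ⊤ := by
    have := Polynomial.adjoin_X (R := ℤ)
    erw [Algebra.adjoin_int] at this
    rw [Subring.eq_top_iff']
    intro p
    have hp : p ∈ subalgebraOfSubring (Subring.closure ({Polynomial.X} : Set (Polynomial ℤ))) := by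
      rw [this]; exact Algebra.mem_top
    exact hp
  have h2 : (⊤ : Subring (Polynomial ℤ)).map (algebraMap (Polynomial ℤ) Ft) =
      Subring.closure {tF} := by
    rw [← h1, RingHom.map_closure]
    congr 1
    simp [tF]
  have h3 := congrArg (fun s : Subring Ft => (s : Set Ft)) h2
  simpa [Subring.coe_map, Set.image_univ] using h3

noncomputable def Sgen : Set L2 := {e1, e2, g3, g4, g5}

lemma A2_eq_map : A2 = (Subring.closure Sgen).map L2.subtype := by
  rw [RingHom.map_closure]
  simp only [Sgen, Set.image_insert_eq, Set.image_singleton]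
  rfl

lemma setA2 : {z : L2 | (z : K2) ∈ A2} = (Subring.closure Sgen : Set L2) := by
  ext z
  simp only [Set.mem_setOf_eq, A2_eq_map, Subring.mem_map, SetLike.mem_coe]
  constructor
  · rintro ⟨w, hw, hwz⟩
    rwa [show w = z from Subtype.coe_injective hwz] at hw
  · exact fun h => ⟨z, h, rfl⟩

theorem stmt_7_aux (ψ : L2 →+* Ft)
    (hψ1 : ∀ z : L2, (z : K2) = x1 → ψ z = tF)
    (hψ2 : ∀ z : L2, (z : K2) = x2 → ψ z = -1) :
    ψ '' {z : L2 | (z : K2) ∈ A2} = Set.range (algebraMap (Polynomial ℤ) Ft) := by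
  rw [setA2, range_eq]
  have h1 : ψ '' (Subring.closure Sgen : Set L2) = ((Subring.closure Sgen).map ψ : Set Ft) := by
    rw [Subring.coe_map]
  rw [h1, RingHom.map_closure]
  suffices h2 : Subring.closure (⇑ψ '' Sgen) = Subring.closure {tF} by rw [h2]
  apply le_antisymm
  · rw [Subring.closure_le]
    rintro y ⟨w, hw, rfl⟩
    simp only [Sgen, Set.mem_insert_iff, Set.mem_singleton_iff] at hw
    rcases hw with rfl | rfl | rfl | rfl | rfl
    · rw [hψ1 e1 rfl]; exact Subring.subset_closure rfl
    · rw [hψ2 e2 rfl]; exact (Subring.closure _).neg_mem (Subring.closure _).one_mem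
    · rw [psi_g3 ψ hψ2]; exact (Subring.closure _).zero_mem
    · rw [psi_g4 ψ hψ1 hψ2]
      exact (Subring.closure _).sub_mem
        ((Subring.closure _).neg_mem (Subring.closure _).one_mem)
        (Subring.subset_closure rfl)
    · rw [psi_g5 ψ hψ1 hψ2]
      exact (Subring.closure _).neg_mem (Subring.closure _).one_mem
  · rw [Subring.closure_le]
    rintro y rfl
    exact Subring.subset_closure ⟨e1, Or.inl rfl, hψ1 e1 rfl⟩

/-- Let `ψ : ℤ[x₁^{±1}, x₂^{±1}] → ℚ(X)` be the (unique) ring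
homomorphism sending `x₁ ↦ X` and `x₂ ↦ -1`.  Then the five cluster variables
of type `A₂` all lie in the Laurent subring, their images under `ψ` are
`X, -1, 0, -1 - X, -1` respectively, and the image under `ψ` of the subring
generated by the five cluster variables is exactly the polynomial subring
`ℤ[X]` of `ℚ(X)`. -/
theorem stmt_7 (ψ : L2 →+* Ft)
    (hψ1 : ∀ z : L2, (z : K2) = x1 → ψ z = tF)
    (hψ2 : ∀ z : L2, (z : K2) = x2 → ψ z = -1) :
    x1 ∈ L2 ∧
    x2 ∈ L2 ∧
    (1 + x2) / x1 ∈ L2 ∧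
    (1 + x1) / x2 ∈ L2 ∧
    (1 + x1 + x2) / (x1 * x2) ∈ L2 ∧
    (∀ z : L2, (z : K2) = (1 + x2) / x1 → ψ z = 0) ∧
    (∀ z : L2, (z : K2) = (1 + x1) / x2 → ψ z = -1 - tF) ∧
    (∀ z : L2, (z : K2) = (1 + x1 + x2) / (x1 * x2) → ψ z = -1) ∧
    ψ '' {z : L2 | (z : K2) ∈ A2} = Set.range (algebraMap (Polynomial ℤ) Ft) := by
  have hg3 : ∀ z : L2, (z : K2) = (1 + x2) / x1 → ψ z = 0 := by
    intro z hz
    rw [show z = g3 from Subtype.coe_injective hz]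
    exact psi_g3 ψ hψ2
  have hg4 : ∀ z : L2, (z : K2) = (1 + x1) / x2 → ψ z = -1 - tF := by
    intro z hz
    rw [show z = g4 from Subtype.coe_injective hz]
    exact psi_g4 ψ hψ1 hψ2
  have hg5 : ∀ z : L2, (z : K2) = (1 + x1 + x2) / (x1 * x2) → ψ z = -1 := by
    intro z hz
    rw [show z = g5 from Subtype.coe_injective hz]
    exact psi_g5 ψ hψ1 hψ2
  exact ⟨m1, m2, m3, m4, m5, hg3, hg4, hg5, stmt_7_aux ψ hψ1 hψ2⟩
end
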